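/- arXiv:1510.05554 — 5 statements merged into one kernel-verified Lean document; each statement's English description precedes it below -/
import Mathlib

section
/- Let G be a group acting on a topological space X by homeomorphisms (i.e., a group action such that for each g ∈ G the map x ↦ g • x is continuous), and let U ⊆ X be an open subset such that the translates of U cover X, i.e., ⋃_{g ∈ G} g • U = X. If X is connected, then the set S = {g ∈ G | (g • U) ∩ U ≠ ∅} generates G, i.e., the subgroup closure of S is all of G. -/
open Pointwise

/-- If a group `G` acts on a connected topological space `X` by homeomorphisms and `U` is an
open subset whose `G`-translates cover `X`, then `S = {g | g • U ∩ U ≠ ∅}` generates `G`. -/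
theorem stmt0 {G X : Type*} [Group G] [TopologicalSpace X] [MulAction G X]
    (hcont : ∀ g : G, Continuous fun x : X => g • x)
    (U : Set X) (hUopen : IsOpen U)
    (hcover : ⋃ g : G, g • U = Set.univ)
    (hconn : ConnectedSpace X) :
    Subgroup.closure {g : G | (g • U) ∩ U ≠ ∅} = ⊤ := by
  set S : Set G := {g : G | (g • U) ∩ U ≠ ∅} with hS
  set H := Subgroup.closure S with hH
  -- each translate is open
  have hopen : ∀ g : G, IsOpen (g • U) := by
    intro g
    have : g • U = (fun x : X => g⁻¹ • x) ⁻¹' U := by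
      ext x
      simp [Set.mem_smul_set_iff_inv_smul_mem]
    rw [this]
    exact hUopen.preimage (hcont g⁻¹)
  -- U is nonempty
  have hXne : Nonempty X := hconn.toNonempty
  obtain ⟨x₀⟩ := hXne
  have hx₀ : x₀ ∈ ⋃ g : G, g • U := by rw [hcover]; trivial
  obtain ⟨g₀, hg₀⟩ := Set.mem_iUnion.1 hx₀
  have hUne : U.Nonempty := by
    obtain ⟨u, hu, -⟩ := hg₀
    exact ⟨u, hu⟩
  -- key lemma: if g•U meets h•U and g ∈ H, then h ∈ H
  have key : ∀ g h : G, g ∈ H → ((g • U) ∩ (h • U)).Nonempty → h ∈ H := by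
    intro g h hg ⟨x, hxg, hxh⟩
    have : ((g⁻¹ * h) • U ∩ U) ≠ ∅ := by
      rw [← Set.nonempty_iff_ne_empty]
      refine ⟨g⁻¹ • x, ?_, ?_⟩
      · rw [mul_smul]
        exact Set.smul_mem_smul_set hxh
      · exact Set.mem_smul_set_iff_inv_smul_mem.1 hxg
    have hmem : g⁻¹ * h ∈ H := Subgroup.subset_closure this
    have := mul_mem hg hmem
    simpa using this
  -- V = union of H-translates
  set V : Set X := ⋃ g : H, (g : G) • U with hV
  have hVopen : IsOpen V := isOpen_iUnion fun g => hopen g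
  have hVcopen : IsOpen Vᶜ := by
    have : Vᶜ = ⋃ g : {g : G // g ∉ H}, (g : G) • U := by
      ext x
      constructor
      · intro hx
        have : x ∈ ⋃ g : G, g • U := by rw [hcover]; trivial
        obtain ⟨g, hg⟩ := Set.mem_iUnion.1 this
        have hgH : g ∉ H := by
          intro hgH
          exact hx (Set.mem_iUnion.2 ⟨⟨g, hgH⟩, hg⟩)
        exact Set.mem_iUnion.2 ⟨⟨g, hgH⟩, hg⟩
      · intro hx hxV
        obtain ⟨⟨g, hg⟩, hxg⟩ := Set.mem_iUnion.1 hx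
        obtain ⟨⟨h, hh⟩, hxh⟩ := Set.mem_iUnion.1 hxV
        exact hg (key h g hh ⟨x, hxh, hxg⟩)
    rw [this]
    exact isOpen_iUnion fun g => hopen g
  have hVne : V.Nonempty := by
    obtain ⟨u, hu⟩ := hUne
    exact ⟨(1 : G) • u, Set.mem_iUnion.2 ⟨⟨1, one_mem H⟩, Set.smul_mem_smul_set hu⟩⟩
  have hVuniv : V = Set.univ := by
    have hclopen : IsClopen V := ⟨isOpen_compl_iff.mp hVcopen, hVopen⟩
    exact hclopen.eq_univ hVne
  -- conclude
  rw [hH, eq_top_iff]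
  intro g _
  obtain ⟨u, hu⟩ := hUne
  have : g • u ∈ V := by rw [hVuniv]; trivial
  obtain ⟨⟨h, hh⟩, hxh⟩ := Set.mem_iUnion.1 this
  exact key h g hh ⟨g • u, hxh, Set.smul_mem_smul_set hu⟩
end

section
/- Let G be a group acting on a topological space X by homeomorphisms, and let U ⊆ X be an open subset with ⋃_{g ∈ G} g • U = X. Suppose X and U are path-connected and X is simply connected. Set S = {g ∈ G | (g • U) ∩ U ≠ ∅}, and let φ : F(S) → G be the homomorphism from the free group on the set S sending each generator to the corresponding element of G. Then φ is surjective and its kernel is the normal closure of the set R = { a_{s₁}·a_{s₂}·a_{s₃}^{-1} | s₁, s₂, s₃ ∈ S, U ∩ (s₁ • U) ∩ (s₃ • U) ≠ ∅, and s₁s₂ = s₃ in G }, where a_s denotes the free generator indexed by s ∈ S. -/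
/-!
A word `w` in the generators spells out a chain `1 = g₀, g₁, …, gₘ = φ w` of translates of `U`,
consecutive ones overlapping. For a homomorphism `ρ` killing the relators, `ρ w` is the holonomy
`∏ ρ(a_{gᵢ⁻¹ gᵢ₊₁})` of this chain, and the relators say precisely that `(p, q) ↦ ρ(a_{p⁻¹ q})` is
a cocycle on triple overlaps of translates. If `φ w = 1` the chain closes up, and joining overlap
points inside the translates gives a loop in `X`. Cutting a null-homotopy of this loop into small
squares, each inside one translate, the cocycle identity shows that all rows have the same
holonomy; the last row is constant, so `ρ w = 1`. Surjectivity of `φ` holds because the translates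
of `U` by the subgroup generated by `S` form a nonempty clopen subset of `X`.
-/

open Pointwise Set

namespace Macbeath

section Holonomy

variable {α M : Type*} [Monoid M]

def holonomy (e : α → α → M) (c : ℕ → α) : ℕ → M
  | 0 => 1
  | n + 1 => holonomy e c n * e (c n) (c (n + 1))

def loopHolonomy (e : α → α → M) (b : α) (c : ℕ → α) (n : ℕ) : M :=
  e b (c 0) * holonomy e c (n - 1) * e (c (n - 1)) b

variable {e : α → α → M} {c : ℕ → α}

@[simp]
theorem holonomy_zero : holonomy e c 0 = 1 := rfl

theorem holonomy_succ (n : ℕ) : holonomy e c (n + 1) = holonomy e c n * e (c n) (c (n + 1)) :=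
  rfl

theorem holonomy_succ' (n : ℕ) :
    holonomy e c (n + 1) = e (c 0) (c 1) * holonomy e (fun i => c (i + 1)) n := by
  induction n with
  | zero => simp [holonomy]
  | succ n ih => rw [holonomy_succ, ih, mul_assoc, ← holonomy_succ]

theorem holonomy_mul_left [Mul α] {a : α} (h : ∀ p q, e (a * p) (a * q) = e p q) (n : ℕ) :
    holonomy e (fun i => a * c i) n = holonomy e c n := by
  induction n with
  | zero => rfl
  | succ n ih => rw [holonomy_succ, holonomy_succ, ih, h]

theorem holonomy_comp_div (he : ∀ p, e p p = 1) (L k : ℕ) :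
    holonomy e (fun i => c (i / L)) k = holonomy e c (k / L) := by
  induction k with
  | zero => simp
  | succ k ih =>
    rw [holonomy_succ, ih, Nat.succ_div]
    split_ifs
    · rfl
    · simp [he]

theorem loopHolonomy_comp_div (he : ∀ p, e p p = 1) (b : α) (c : ℕ → α) {n L : ℕ} (hn : 0 < n)
    (hL : 0 < L) : loopHolonomy e b (fun i => c (i / L)) (n * L) = loopHolonomy e b c n := by
  have : (n * L - 1) / L = n - 1 := by
    obtain ⟨n, rfl⟩ : ∃ k, n = k + 1 := ⟨n - 1, by omega⟩
    refine Nat.div_eq_of_lt_le ?_ ?_ <;> simp only [Nat.add_sub_cancel, add_mul, one_mul] <;> omega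
  simp only [loopHolonomy, holonomy_comp_div he, this, Nat.zero_div]

theorem holonomy_prod_take {G : Type*} [Group G] (E : G → M) (l : List G) :
    holonomy (fun p q => E (p⁻¹ * q)) (fun i => (l.take i).prod) l.length = (l.map E).prod := by
  induction l with
  | nil => rfl
  | cons a l ih =>
    rw [List.length_cons, holonomy_succ']
    simp only [List.take_succ_cons, List.prod_cons, List.take_zero, List.prod_nil, inv_one,
      one_mul, mul_one, List.map_cons]
    rw [holonomy_mul_left (fun p q => by rw [mul_inv_rev, mul_assoc, inv_mul_cancel_left]), ih]

end Holonomy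

variable {G H X : Type*} [Group G] [Group H] [MulAction G X]

def IsCocycle (U : Set X) (e : G → G → H) : Prop :=
  ∀ ⦃p q r : G⦄ ⦃x : X⦄, x ∈ p • U → x ∈ q • U → x ∈ r • U → e p q * e q r = e p r

def IsGridChain (U : Set X) (f : ℝ → X) (n : ℕ) (c : ℕ → G) : Prop :=
  ∀ i < n, MapsTo f (Icc ((i : ℝ) / n) ((i + 1) / n)) (c i • U)

section GridChain

variable {U : Set X} {e : G → G → H} {f : ℝ → X} {n : ℕ} {b : G} {c d : ℕ → G}

theorem IsCocycle.apply_self (he : IsCocycle U e) (hU : U.Nonempty) (p : G) : e p p = 1 := by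
  obtain ⟨x, hx⟩ := hU.smul_set (a := p)
  exact mul_eq_left.mp (he hx hx hx)

theorem IsCocycle.holonomy_mul_eq_mul_holonomy (he : IsCocycle U e) {K : ℕ}
    (hw : ∀ i < K, ∃ x, x ∈ c i • U ∧ x ∈ c (i + 1) • U ∧ x ∈ d i • U ∧ x ∈ d (i + 1) • U) :
    holonomy e c K * e (c K) (d K) = e (c 0) (d 0) * holonomy e d K := by
  induction K with
  | zero => simp
  | succ K ih =>
    obtain ⟨x, hc, hc', hd, hd'⟩ := hw K K.lt_succ_self
    rw [holonomy_succ, holonomy_succ, mul_assoc, he hc hc' hd', ← he hc hd hd', ← mul_assoc,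
      ih fun i hi => hw i (by omega), mul_assoc]

theorem IsGridChain.left_mem (hc : IsGridChain U f n c) {i : ℕ} (hi : i < n) :
    f (i / n) ∈ c i • U :=
  hc i hi ⟨le_rfl, by gcongr; linarith⟩

theorem IsGridChain.right_mem (hc : IsGridChain U f n c) {i : ℕ} (hi : i < n) :
    f ((i + 1) / n) ∈ c i • U :=
  hc i hi ⟨by gcongr; linarith, le_rfl⟩

theorem IsGridChain.comp_div (hc : IsGridChain U f n c) {L : ℕ} (hL : 0 < L) :
    IsGridChain U f (n * L) (fun i => c (i / L)) := by
  intro i hi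
  have hn : (0 : ℝ) < n := by exact_mod_cast Nat.pos_of_mul_pos_right (Nat.zero_lt_of_lt hi)
  have hL' : (0 : ℝ) < L := by exact_mod_cast hL
  have hlo : ((i / L : ℕ) : ℝ) * L ≤ i := by exact_mod_cast Nat.div_mul_le_self i L
  have hhi : (i : ℝ) + 1 ≤ ((i / L : ℕ) + 1) * L := by
    have := Nat.lt_div_mul_add (a := i) hL
    exact_mod_cast (by rw [add_mul, one_mul]; omega : i + 1 ≤ (i / L + 1) * L)
  refine (hc (i / L) (Nat.div_lt_of_lt_mul (by rwa [Nat.mul_comm]))).mono_left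
    (Icc_subset_Icc ?_ ?_) <;> push_cast
  · rw [div_le_div_iff₀ hn (by positivity)]
    nlinarith
  · rw [div_le_div_iff₀ (by positivity) hn]
    nlinarith

theorem IsCocycle.loopHolonomy_eq_of_isGridChain_same_grid (he : IsCocycle U e)
    (hc : IsGridChain U f n c) (hd : IsGridChain U f n d) (hn : 0 < n) (h0 : f 0 ∈ b • U)
    (h1 : f 1 ∈ b • U) : loopHolonomy e b c n = loopHolonomy e b d n := by
  obtain ⟨K, rfl⟩ : ∃ K, n = K + 1 := ⟨n - 1, by omega⟩
  have hf0 : ∀ {c : ℕ → G}, IsGridChain U f (K + 1) c → f 0 ∈ c 0 • U := fun hc => by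
    simpa using hc.left_mem K.succ_pos
  have hf1 : ∀ {c : ℕ → G}, IsGridChain U f (K + 1) c → f 1 ∈ c K • U := fun hc => by
    have := hc.right_mem K.lt_succ_self
    rwa [Nat.cast_succ, div_self (by positivity)] at this
  have ladder := he.holonomy_mul_eq_mul_holonomy (c := c) (d := d) (K := K) fun i hi =>
    ⟨f ((i + 1) / (K + 1 : ℕ)), hc.right_mem (by omega),
      by simpa using hc.left_mem (i := i + 1) (by omega), hd.right_mem (by omega),
      by simpa using hd.left_mem (i := i + 1) (by omega)⟩
  simp only [loopHolonomy, Nat.add_sub_cancel]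
  rw [← he (hf1 hc) (hf1 hd) h1, ← he h0 (hf0 hc) (hf0 hd)]
  simp only [← mul_assoc]
  rw [mul_assoc (e b (c 0)) (holonomy e c K), ladder]
  simp only [mul_assoc]

theorem IsCocycle.loopHolonomy_eq_of_isGridChain (he : IsCocycle U e) (hU : U.Nonempty) {k : ℕ}
    (hc : IsGridChain U f n c) (hd : IsGridChain U f k d) (hn : 0 < n) (hk : 0 < k)
    (h0 : f 0 ∈ b • U) (h1 : f 1 ∈ b • U) :
    loopHolonomy e b c n = loopHolonomy e b d k := by
  rw [← loopHolonomy_comp_div (he.apply_self hU) b c hn hk,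
    ← loopHolonomy_comp_div (he.apply_self hU) b d hk hn, Nat.mul_comm k n]
  exact he.loopHolonomy_eq_of_isGridChain_same_grid (hc.comp_div hk)
    (Nat.mul_comm k n ▸ hd.comp_div hn) (Nat.mul_pos hn hk) h0 h1

end GridChain

section Topology

variable [TopologicalSpace X] [ContinuousConstSMul G X] {U : Set X}

theorem exists_path_mem_smul (hU : IsPathConnected U) (g : G) {x y : X} (hx : x ∈ g • U)
    (hy : y ∈ g • U) : ∃ p : Path x y, ∀ t, p.extend t ∈ g • U := by
  have hgU : IsPathConnected (g • U) :=
    image_smul (t := U) (a := g) ▸ hU.image (continuous_const_smul g)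
  have h := hgU.joinedIn x hx y hy
  exact ⟨h.somePath, fun t => h.somePath_mem _⟩

theorem exists_continuous_mapsTo_Icc (hU : IsPathConnected U) (c : ℕ → G) {x : X}
    (hx : x ∈ c 0 • U) (m : ℕ) (hadj : ∀ i < m, (c i • U ∩ c (i + 1) • U).Nonempty) {y : X}
    (hy : y ∈ c m • U) :
    ∃ f : ℝ → X, Continuous f ∧ f 0 = x ∧ f (m + 1) = y ∧
      ∀ k ≤ m, MapsTo f (Icc (k : ℝ) (k + 1)) (c k • U) := by
  induction m generalizing y with
  | zero =>
    obtain ⟨p, hp⟩ := exists_path_mem_smul hU (c 0) hx hy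
    refine ⟨p.extend, p.continuous_extend, p.extend_zero, by simp, fun k hk t _ => ?_⟩
    obtain rfl : k = 0 := by omega
    exact hp t
  | succ m ih =>
    obtain ⟨z, hz, hz'⟩ := hadj m m.lt_succ_self
    obtain ⟨f, hf, hf0, hfz, hfU⟩ := ih (fun i hi => hadj i (by omega)) hz
    obtain ⟨p, hp⟩ := exists_path_mem_smul hU (c (m + 1)) hz' hy
    refine ⟨fun t => if t ≤ m + 1 then f t else p.extend (t - (m + 1)), ?_, ?_, ?_, ?_⟩
    · exact hf.if_le (p.continuous_extend.comp (by fun_prop)) continuous_id continuous_const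
        fun t ht => by simp [ht, hfz]
    · simp [hf0, show (0 : ℝ) ≤ m + 1 by positivity]
    · push_cast
      simp [show ¬ ((m : ℝ) + 1 + 1 ≤ m + 1) by linarith]
    · intro k hk t ht
      rcases hk.lt_or_eq with hk | rfl
      · have : t ≤ m + 1 := ht.2.trans (by exact_mod_cast hk)
        simp only [if_pos this]
        exact hfU k (by omega) ht
      · push_cast at ht
        dsimp only
        split_ifs with h
        · rwa [le_antisymm h ht.1, hfz]
        · exact hp _

theorem exists_path_isGridChain (hU : IsPathConnected U) (c : ℕ → G) {x : X}
    (hx : x ∈ c 0 • U) (m : ℕ) (hadj : ∀ i < m, (c i • U ∩ c (i + 1) • U).Nonempty) {y : X}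
    (hy : y ∈ c m • U) : ∃ γ : Path x y, IsGridChain U γ.extend (m + 1) c := by
  obtain ⟨f, hf, hf0, hfy, hfU⟩ := exists_continuous_mapsTo_Icc hU c hx m hadj hy
  refine ⟨Path.ofLine (f := fun t => f ((m + 1) * t)) (by fun_prop) (by simpa using hf0)
    (by simpa using hfy), fun k hk t ht => ?_⟩
  have hm : (0 : ℝ) < m + 1 := by positivity
  obtain ⟨ht1, ht2⟩ := ht
  push_cast at ht1 ht2
  rw [div_le_iff₀ hm] at ht1
  rw [le_div_iff₀ hm] at ht2
  have hk' : (k : ℝ) + 1 ≤ m + 1 := by exact_mod_cast hk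
  have ht01 : t ∈ Icc (0 : ℝ) 1 := ⟨by nlinarith [(k.cast_nonneg : (0 : ℝ) ≤ k)], by nlinarith⟩
  rw [Path.extend_apply _ ht01]
  exact hfU k (by omega) ⟨by linarith, by linarith⟩

theorem Icc_div_subset_ball {n : ℕ} {δ : ℝ} (hn : 1 / (n : ℝ) < δ) (i : ℕ) :
    Icc ((i : ℝ) / n) ((i + 1) / n) ⊆ Metric.ball ((i : ℝ) / n) δ := fun s hs =>
  ((Real.dist_le_of_mem_Icc hs (left_mem_Icc.2 (hs.1.trans hs.2))).trans_eq (by ring)).trans_lt hn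

theorem exists_isGridChain_rows (hUo : IsOpen U) (hcover : ⋃ g : G, g • U = univ)
    {F : ℝ × ℝ → X} (hF : Continuous F) :
    ∃ n : ℕ, 0 < n ∧ ∀ j < n, ∃ c : ℕ → G,
      ∀ τ ∈ Icc ((j : ℝ) / n) ((j + 1) / n), IsGridChain U (fun s => F (τ, s)) n c := by
  obtain ⟨δ, hδ, hball⟩ := lebesgue_number_lemma_of_metric (isCompact_Icc.prod isCompact_Icc)
    (fun g : G => (hUo.smul g).preimage hF) (by simp [← preimage_iUnion, hcover])
  obtain ⟨n, hn⟩ := exists_nat_one_div_lt hδ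
  have hcell := Icc_div_subset_ball (n := n + 1) (by exact_mod_cast hn)
  have hunit : ∀ i < n + 1, (i : ℝ) / (n + 1 : ℕ) ∈ Icc (0 : ℝ) 1 := fun i hi =>
    ⟨by positivity, div_le_one_of_le₀ (by exact_mod_cast hi.le) (by positivity)⟩
  refine ⟨n + 1, n.succ_pos, fun j hj => ?_⟩
  have : ∀ i, ∃ g : G, i < n + 1 →
      Metric.ball ((j : ℝ) / (n + 1 : ℕ), (i : ℝ) / (n + 1 : ℕ)) δ ⊆ F ⁻¹' (g • U) := fun i => by
    by_cases hi : i < n + 1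
    · obtain ⟨g, hg⟩ := hball _ (mk_mem_prod (hunit j hj) (hunit i hi))
      exact ⟨g, fun _ => hg⟩
    · exact ⟨1, fun h => absurd h hi⟩
  choose c hc using this
  refine ⟨c, fun τ hτ i hi s hs => hc i hi ?_⟩
  rw [← ball_prod_same]
  exact ⟨hcell j hτ, hcell i hs⟩

theorem IsCocycle.loopHolonomy_eq_of_homotopy (hUo : IsOpen U) (hcover : ⋃ g : G, g • U = univ)
    (hU : U.Nonempty) {e : G → G → H} (he : IsCocycle U e) {F : ℝ × ℝ → X} (hF : Continuous F)
    {b : G} (h0 : ∀ τ, F (τ, 0) ∈ b • U) (h1 : ∀ τ, F (τ, 1) ∈ b • U) {c d : ℕ → G} {k l : ℕ}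
    (hk : 0 < k) (hl : 0 < l) (hc : IsGridChain U (fun s => F (0, s)) k c)
    (hd : IsGridChain U (fun s => F (1, s)) l d) :
    loopHolonomy e b c k = loopHolonomy e b d l := by
  obtain ⟨n, hn, rows⟩ := exists_isGridChain_rows hUo hcover hF
  -- The chain of the `j`-th strip is a chain of both rows bounding it.
  have key : ∀ j ≤ n, ∀ k' d', 0 < k' → IsGridChain U (fun s => F ((j : ℝ) / n, s)) k' d' →
      loopHolonomy e b d' k' = loopHolonomy e b c k := by
    intro j hj
    induction j with
    | zero =>
      intro k' d' hk' hd'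
      rw [Nat.cast_zero, zero_div] at hd'
      exact he.loopHolonomy_eq_of_isGridChain hU hd' hc hk' hk (h0 0) (h1 0)
    | succ j ih =>
      intro k' d' hk' hd'
      obtain ⟨r, hr⟩ := rows j (by omega)
      have hj : (j : ℝ) / n ≤ (j + 1) / n := by gcongr; linarith
      have hr' := hr _ ⟨hj, le_rfl⟩
      rw [← Nat.cast_succ] at hr'
      rw [he.loopHolonomy_eq_of_isGridChain hU hd' hr' hk' hn (h0 _) (h1 _),
        ih (by omega) n r hn (hr _ ⟨le_rfl, hj⟩)]
  exact (key n le_rfl l d hl (by rwa [div_self (by positivity)])).symm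

theorem IsCocycle.holonomy_eq_one [SimplyConnectedSpace X] (hUo : IsOpen U)
    (hU : IsPathConnected U) (hcover : ⋃ g : G, g • U = univ) {e : G → G → H}
    (he : IsCocycle U e) (c : ℕ → G) (m : ℕ) (hcm : c m = c 0)
    (hadj : ∀ i < m, (c i • U ∩ c (i + 1) • U).Nonempty) : holonomy e c m = 1 := by
  obtain ⟨x, hx⟩ : (c 0 • U).Nonempty := hU.nonempty.smul_set
  obtain ⟨γ, hγ⟩ := exists_path_isGridChain hU c hx m hadj (hcm ▸ hx)
  obtain ⟨Γ⟩ := SimplyConnectedSpace.paths_homotopic γ (Path.refl x)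
  set F : ℝ × ℝ → X := fun z => Γ (projIcc 0 1 zero_le_one z.1, projIcc 0 1 zero_le_one z.2)
  have hγF : (fun s => F (0, s)) = γ.extend := funext fun s => by
    simp only [F, projIcc_left, Path.extend]
    exact Γ.apply_zero _
  have hconst : IsGridChain U (fun s => F (1, s)) 1 (fun _ => c 0) :=
    fun _ _ s _ => by simpa [F] using hx
  have := he.loopHolonomy_eq_of_homotopy hUo hcover hU.nonempty
    (Γ.continuous.comp (continuous_projIcc.prodMap continuous_projIcc))
    (fun τ => by simpa [F] using hx) (fun τ => by simpa [F] using hx) m.succ_pos one_pos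
    (hγF ▸ hγ) hconst
  simpa [loopHolonomy, hcm, he.apply_self hU.nonempty] using this

end Topology

section Presentation

variable (G) (U : Set X)

def overlapSet : Set G := {g | g • U ∩ U ≠ ∅}

def overlapRelators : Set (FreeGroup (overlapSet G U)) :=
  {w | ∃ s₁ s₂ s₃ : overlapSet G U,
    U ∩ ((s₁ : G) • U) ∩ ((s₃ : G) • U) ≠ ∅ ∧
    (s₁ : G) * (s₂ : G) = (s₃ : G) ∧
    w = FreeGroup.of s₁ * FreeGroup.of s₂ * (FreeGroup.of s₃)⁻¹}

variable {G U}

theorem inv_mul_mem_overlapSet_iff {p q : G} :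
    p⁻¹ * q ∈ overlapSet G U ↔ (p • U ∩ q • U).Nonempty := by
  rw [overlapSet, mem_ofPred_eq, ← nonempty_iff_ne_empty, ← smul_set_nonempty (a := p),
    smul_set_inter, smul_smul, mul_inv_cancel_left, inter_comm]

theorem inv_mul_mem_overlapSet {p q : G} {x : X} (hp : x ∈ p • U) (hq : x ∈ q • U) :
    p⁻¹ * q ∈ overlapSet G U :=
  inv_mul_mem_overlapSet_iff.2 ⟨x, hp, hq⟩

theorem inv_mem_overlapSet {s : G} (hs : s ∈ overlapSet G U) : s⁻¹ ∈ overlapSet G U := by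
  rw [← mul_one s⁻¹, inv_mul_mem_overlapSet_iff, inter_comm, ← inv_mul_mem_overlapSet_iff, inv_one,
    one_mul]
  exact hs

theorem closure_overlapSet_eq_top [TopologicalSpace X] [ContinuousConstSMul G X]
    [PreconnectedSpace X] (hUo : IsOpen U) (hU : U.Nonempty) (hcover : ⋃ g : G, g • U = univ) :
    Subgroup.closure (overlapSet G U) = ⊤ := by
  set K := Subgroup.closure (overlapSet G U)
  have mem_K : ∀ {p q : G} {x : X}, p ∈ K → x ∈ p • U → x ∈ q • U → q ∈ K := fun hp hxp hxq => by
    simpa using K.mul_mem hp (Subgroup.subset_closure (inv_mul_mem_overlapSet hxp hxq))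
  have hA : IsClopen (⋃ k ∈ K, k • U) := by
    refine ⟨?_, isOpen_biUnion fun k _ => hUo.smul k⟩
    rw [← isOpen_compl_iff, isOpen_iff_forall_mem_open]
    intro x hx
    obtain ⟨g, hg⟩ := mem_iUnion.1 (hcover.symm ▸ mem_univ x)
    refine ⟨g • U, fun y hy hyA => ?_, hUo.smul g, hg⟩
    obtain ⟨k, hk, hyk⟩ := mem_iUnion₂.1 hyA
    exact hx (mem_biUnion (mem_K hk hyk hy) hg)
  obtain ⟨u, hu⟩ := hU
  have hAU := hA.eq_univ ⟨u, mem_biUnion K.one_mem (by simpa using hu)⟩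
  refine eq_top_iff.2 fun g _ => ?_
  obtain ⟨k, hk, hgk⟩ := mem_iUnion₂.1 (hAU.symm ▸ mem_univ (g • u))
  exact mem_K hk hgk (smul_mem_smul_set hu)

variable (ρ : FreeGroup (overlapSet G U) →* H)

open Classical in
noncomputable def extendOverlap (g : G) : H :=
  if h : g ∈ overlapSet G U then ρ (.of ⟨g, h⟩) else 1

theorem extendOverlap_of_mem {g : G} (h : g ∈ overlapSet G U) :
    extendOverlap ρ g = ρ (.of ⟨g, h⟩) :=
  dif_pos h

variable {ρ}

theorem isCocycle_extendOverlap (hρ : ∀ w ∈ overlapRelators G U, ρ w = 1) :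
    IsCocycle U fun p q => extendOverlap ρ (p⁻¹ * q) := by
  intro p q r x hp hq hr
  have h₁ := inv_mul_mem_overlapSet hp hq
  have h₂ := inv_mul_mem_overlapSet hq hr
  have h₃ := inv_mul_mem_overlapSet hp hr
  have hx : p⁻¹ • x ∈ U ∩ (p⁻¹ * q) • U ∩ (p⁻¹ * r) • U := by
    simp only [← smul_smul]
    exact ⟨⟨mem_smul_set_iff_inv_smul_mem.1 hp, smul_mem_smul_set hq⟩, smul_mem_smul_set hr⟩
  have hrel := hρ _ ⟨⟨_, h₁⟩, ⟨_, h₂⟩, ⟨_, h₃⟩, nonempty_iff_ne_empty.1 ⟨_, hx⟩, by group, rfl⟩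
  dsimp only
  rw [extendOverlap_of_mem ρ h₁, extendOverlap_of_mem ρ h₂, extendOverlap_of_mem ρ h₃]
  simpa [mul_inv_eq_one] using hrel

theorem extendOverlap_inv (hρ : ∀ w ∈ overlapRelators G U, ρ w = 1) (s : overlapSet G U) :
    extendOverlap ρ (s : G)⁻¹ = (ρ (.of s))⁻¹ := by
  obtain ⟨x, hx1, hxs⟩ := (inv_mul_mem_overlapSet_iff (p := 1) (q := (s : G))).1
    (by rw [inv_one, one_mul]; exact s.2)
  have h := isCocycle_extendOverlap hρ hx1 hxs hx1
  have h1 := (isCocycle_extendOverlap hρ).apply_self ⟨x, by simpa using hx1⟩ 1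
  simp only [inv_one, one_mul, mul_one] at h h1
  rw [h1, extendOverlap_of_mem ρ s.2] at h
  exact eq_inv_of_mul_eq_one_right h

theorem exists_list_overlapSet_prod_eq (hρ : ∀ w ∈ overlapRelators G U, ρ w = 1)
    (w : FreeGroup (overlapSet G U)) :
    ∃ l : List G, (∀ g ∈ l, g ∈ overlapSet G U) ∧ l.prod = FreeGroup.lift (↑) w ∧
      (l.map (extendOverlap ρ)).prod = ρ w := by
  induction w using FreeGroup.induction_on with
  | C1 => exact ⟨[], by simp, by simp, by simp⟩
  | of s => exact ⟨[s], by simp, by simp, by simp [extendOverlap_of_mem ρ s.2]⟩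
  | inv_of s _ =>
    exact ⟨[(s : G)⁻¹], by simpa using inv_mem_overlapSet s.2, by simp,
      by simp [extendOverlap_inv hρ]⟩
  | mul v w hv hw =>
    obtain ⟨l₁, hl₁, hv₁, hv₂⟩ := hv
    obtain ⟨l₂, hl₂, hw₁, hw₂⟩ := hw
    refine ⟨l₁ ++ l₂, fun g hg => ?_, by simp [hv₁, hw₁], by simp [hv₂, hw₂]⟩
    rcases List.mem_append.1 hg with hg | hg
    exacts [hl₁ g hg, hl₂ g hg]

theorem ker_lift_le_ker [TopologicalSpace X] [ContinuousConstSMul G X] [SimplyConnectedSpace X]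
    (hUo : IsOpen U) (hU : IsPathConnected U) (hcover : ⋃ g : G, g • U = univ)
    (hρ : ∀ w ∈ overlapRelators G U, ρ w = 1) :
    (FreeGroup.lift fun s : overlapSet G U => (s : G)).ker ≤ ρ.ker := by
  intro w hw
  obtain ⟨l, hlS, hlG, hlH⟩ := exists_list_overlapSet_prod_eq hρ w
  rw [MonoidHom.mem_ker] at hw ⊢
  rw [← hlH, ← holonomy_prod_take]
  refine (isCocycle_extendOverlap hρ).holonomy_eq_one hUo hU hcover _ _ (by simp [hlG, hw])
    fun i hi => ?_
  rw [← inv_mul_mem_overlapSet_iff, List.prod_take_succ _ _ hi, inv_mul_cancel_left]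
  exact hlS _ (List.getElem_mem hi)

theorem overlapRelators_subset_ker :
    overlapRelators G U ⊆ ((FreeGroup.lift fun s : overlapSet G U => (s : G)).ker : Set _) := by
  rintro w ⟨s₁, s₂, s₃, -, h, rfl⟩
  simp [h]

end Presentation

end Macbeath

open Macbeath in
/-- If a group `G` acts on a simply connected topological space `X` by homeomorphisms, `U` is a
path-connected open subset whose `G`-translates cover `X`, and `S = {g | g • U ∩ U ≠ ∅}`, then the
canonical map from the free group on `S` to `G` is surjective with kernel the normal closure of
the relators `a_{s₁} a_{s₂} a_{s₃}⁻¹` for `s₁ s₂ = s₃` with `U ∩ s₁ • U ∩ s₃ • U ≠ ∅`. -/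
theorem stmt1 {G X : Type*} [Group G] [TopologicalSpace X] [MulAction G X]
    (hcont : ∀ g : G, Continuous fun x : X => g • x)
    (U : Set X) (hUopen : IsOpen U)
    (hcover : ⋃ g : G, g • U = Set.univ)
    (hX : SimplyConnectedSpace X) (hUpc : IsPathConnected U)
    (S : Set G) (hS : S = {g : G | (g • U) ∩ U ≠ ∅})
    (φ : FreeGroup S →* G) (hφ : φ = FreeGroup.lift (fun s : S => (s : G))) :
    Function.Surjective φ ∧
      φ.ker = Subgroup.normalClosure
        {w : FreeGroup S | ∃ s₁ s₂ s₃ : S,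
          U ∩ ((s₁ : G) • U) ∩ ((s₃ : G) • U) ≠ ∅ ∧
          (s₁ : G) * (s₂ : G) = (s₃ : G) ∧
          w = FreeGroup.of s₁ * FreeGroup.of s₂ * (FreeGroup.of s₃)⁻¹} := by
  have : ContinuousConstSMul G X := ⟨hcont⟩
  subst hS hφ
  refine ⟨FreeGroup.lift_surjective_iff_closure_range_eq_top.2 ?_, le_antisymm ?_ ?_⟩
  · rw [Subtype.range_coe]
    exact closure_overlapSet_eq_top hUopen hUpc.nonempty hcover
  · have := ker_lift_le_ker hUopen hUpc hcover
      (ρ := QuotientGroup.mk' (Subgroup.normalClosure (overlapRelators G U)))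
      fun w hw => (QuotientGroup.eq_one_iff w).2 (Subgroup.subset_normalClosure hw)
    rwa [QuotientGroup.ker_mk'] at this
  · exact Subgroup.normalClosure_le_normal overlapRelators_subset_ker
end

section
/- Let G be a topological group acting properly and continuously on a nonempty connected topological space X (proper means the map G × X → X × X, (g,x) ↦ (g • x, x), is proper). Suppose there is an open subset U ⊆ X with compact closure such that ⋃_{g ∈ G} g • U = X. Then G is compactly generated: there exists a compact subset S ⊆ G whose subgroup closure is all of G. -/
open Pointwise Set

/-!
By properness, `{g | g • closure U ∩ closure U ≠ ∅}` is compact; it contains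
`S₀ = {g | g • U ∩ U ≠ ∅}`, and it suffices that `S₀` generates `G`. Let `H` be the subgroup generated
by `S₀`. If `h • U` meets `g • U` then `h⁻¹ g ∈ S₀`, so the translates of `U` by `H` and by `G \ H`
are disjoint open sets covering `X`. As `X` is connected and the first is nonempty, `H = G`.
-/

section Generation

variable {G X : Type*} [Group G] [MulAction G X]

theorem smul_inter_smul_nonempty_iff {U : Set X} {a b : G} :
    (a • U ∩ b • U).Nonempty ↔ ((a⁻¹ * b) • U ∩ U).Nonempty := by
  rw [← smul_set_nonempty (a := a⁻¹), smul_set_inter, inv_smul_smul, smul_smul, inter_comm]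

theorem mem_closure_setOf_smul_inter_nonempty {U : Set X} {a b : G}
    (hab : (a • U ∩ b • U).Nonempty)
    (ha : a ∈ Subgroup.closure {g : G | (g • U ∩ U).Nonempty}) :
    b ∈ Subgroup.closure {g : G | (g • U ∩ U).Nonempty} := by
  have hS : a⁻¹ * b ∈ Subgroup.closure {g : G | (g • U ∩ U).Nonempty} :=
    Subgroup.subset_closure (smul_inter_smul_nonempty_iff.mp hab)
  simpa using mul_mem ha hS

variable [TopologicalSpace X] [ContinuousConstSMul G X] [ConnectedSpace X]

theorem closure_setOf_smul_inter_nonempty_eq_top {U : Set X} (hU : IsOpen U)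
    (hcover : ⋃ g : G, g • U = univ) :
    Subgroup.closure {g : G | (g • U ∩ U).Nonempty} = ⊤ := by
  set H := Subgroup.closure {g : G | (g • U ∩ U).Nonempty}
  have hUne : U.Nonempty := by
    obtain ⟨x₀⟩ : Nonempty X := inferInstance
    obtain ⟨g₀, hg₀⟩ := iUnion_eq_univ_iff.mp hcover x₀
    exact smul_set_nonempty.mp ⟨x₀, hg₀⟩
  have hopen (s : Set G) : IsOpen (⋃ h ∈ s, h • U) := isOpen_biUnion fun h _ => hU.smul h
  have hunion : (⋃ h ∈ (H : Set G), h • U) ∪ ⋃ h ∈ (H : Set G)ᶜ, h • U = univ := by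
    rw [← biUnion_union, union_compl_self, biUnion_univ, hcover]
  refine eq_top_iff.mpr fun g _ => by_contra fun hg => ?_
  obtain ⟨x, hxH, hxG⟩ := nonempty_inter (hopen _) (hopen _) hunion
    ((smul_set_nonempty.mpr hUne).mono (subset_biUnion_of_mem (u := (· • U)) H.one_mem))
    ((smul_set_nonempty.mpr hUne).mono (subset_biUnion_of_mem (u := (· • U)) hg))
  obtain ⟨a, ha, hxa⟩ := mem_iUnion₂.mp hxH
  obtain ⟨b, hb, hxb⟩ := mem_iUnion₂.mp hxG
  exact hb (mem_closure_setOf_smul_inter_nonempty ⟨x, hxa, hxb⟩ ha)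

end Generation

theorem stmt3_general {G X : Type*} [Group G] [TopologicalSpace G]
    [TopologicalSpace X] [MulAction G X]
    (hproper : IsProperMap (fun p : G × X => (p.1 • p.2, p.2)))
    (hconn : ConnectedSpace X)
    (U : Set X) (hUopen : IsOpen U) (hUcl : IsCompact (closure U))
    (hcover : ⋃ g : G, g • U = Set.univ) :
    ∃ S : Set G, IsCompact S ∧ Subgroup.closure S = ⊤ := by
  have : ProperSMul G X := ⟨hproper⟩
  refine ⟨{g | (g • closure U ∩ closure U).Nonempty},
    ProperSMul.isCompact_setOfPred_inter_nonempty hUcl hUcl, top_unique ?_⟩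
  rw [← closure_setOf_smul_inter_nonempty_eq_top hUopen hcover]
  exact Subgroup.closure_mono fun g hg =>
    hg.mono (inter_subset_inter (smul_set_mono subset_closure) subset_closure)

/-- If a topological group `G` acts properly and continuously on a nonempty connected space `X`
and there is an open relatively compact `U ⊆ X` whose translates cover `X`, then `G` is
compactly generated. -/
theorem stmt3 {G X : Type*} [Group G] [TopologicalSpace G] [IsTopologicalGroup G]
    [TopologicalSpace X] [MulAction G X]
    (hproper : IsProperMap (fun p : G × X => (p.1 • p.2, p.2)))
    (hne : Nonempty X) (hconn : ConnectedSpace X)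
    (U : Set X) (hUopen : IsOpen U) (hUcl : IsCompact (closure U))
    (hcover : ⋃ g : G, g • U = Set.univ) :
    ∃ S : Set G, IsCompact S ∧ Subgroup.closure S = ⊤ :=
  stmt3_general hproper hconn U hUopen hUcl hcover
end

section
/- Let G be a group and H ≤ G a subgroup equipped with a topology making H a topological group. Assume that for every g ∈ G and every neighborhood U of the identity in H there exists a neighborhood V of the identity in H such that g v g^{-1} ∈ H for all v ∈ V and {g v g^{-1} | v ∈ V} ⊆ U (viewing U, V as subsets of G). Then there exists a unique topology on G making G a topological group such that H is an open subset of G and the subspace topology on H coincides with the given topology. -/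
/-!
The images in `G` of the identity neighborhoods of `H` form a group filter basis: the group
axioms come from those of `H`, and the conjugation axiom is exactly the hypothesis. The group
topology it generates has these images as identity neighborhoods, so `H` is open in it and
carries its own topology. Conversely, in any group topology for which `H` is open with the
given subspace topology, the identity neighborhoods are these same images, and a group
topology is determined by its identity neighborhoods.
-/

open Filter Set Topology

theorem nhds_eq_map_val_of_isOpen {X : Type*} [TopologicalSpace X] {p : X → Prop}
    [ts : TopologicalSpace (Subtype p)] (hp : IsOpen {x | p x})
    (hind : TopologicalSpace.induced Subtype.val ‹TopologicalSpace X› = ts) {x : X} (hx : p x) :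
    𝓝 x = map Subtype.val (𝓝 ⟨x, hx⟩) := by
  subst hind
  exact (map_nhds_subtype_coe_eq_nhds hx (hp.mem_nhds hx)).symm

namespace Subgroup

variable {G : Type*} [Group G] (H : Subgroup G) [TopologicalSpace H] [IsTopologicalGroup H]

abbrev nhdsOneGroupFilterBasis
    (hconj : ∀ g : G,
      Tendsto (fun v : H => g * (v : G) * g⁻¹) (𝓝 1) (Filter.map (↑) (𝓝 (1 : H)))) :
    GroupFilterBasis G where
  sets := image ((↑) : H → G) '' (𝓝 (1 : H)).sets
  nonempty := ⟨_, mem_image_of_mem _ univ_mem⟩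
  inter_sets := by
    rintro _ _ ⟨U, hU, rfl⟩ ⟨V, hV, rfl⟩
    exact ⟨_, mem_image_of_mem _ (inter_mem hU hV), image_inter_subset _ _ _⟩
  one' := by
    rintro _ ⟨U, hU, rfl⟩
    exact ⟨1, mem_of_mem_nhds hU, rfl⟩
  mul' := by
    rintro _ ⟨U, hU, rfl⟩
    obtain ⟨V, hV, hVU⟩ := exists_nhds_one_split hU
    refine ⟨_, mem_image_of_mem _ hV, ?_⟩
    rintro _ ⟨_, ⟨a, ha, rfl⟩, _, ⟨b, hb, rfl⟩, rfl⟩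
    exact ⟨a * b, hVU a ha b hb, rfl⟩
  inv' := by
    rintro _ ⟨U, hU, rfl⟩
    refine ⟨_, mem_image_of_mem _ (inv_mem_nhds_one H hU), ?_⟩
    rintro _ ⟨a, ha, rfl⟩
    exact ⟨a⁻¹, ha, rfl⟩
  conj' := by
    rintro g _ ⟨U, hU, rfl⟩
    refine ⟨_, mem_image_of_mem _ (hconj g (image_mem_map hU)), ?_⟩
    rintro _ ⟨a, ha, rfl⟩
    exact ha

variable {H}
variable (hconj : ∀ g : G,
  Tendsto (fun v : H => g * (v : G) * g⁻¹) (𝓝 1) (Filter.map (↑) (𝓝 (1 : H))))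

theorem filter_nhdsOneGroupFilterBasis :
    (nhdsOneGroupFilterBasis H hconj).filter = Filter.map (↑) (𝓝 (1 : H)) := by
  ext s
  rw [FilterBasis.mem_filter_iff, Filter.mem_map]
  constructor
  · rintro ⟨_, ⟨U, hU, rfl⟩, hUs⟩
    exact mem_of_superset hU fun v hv => hUs ⟨v, hv, rfl⟩
  · exact fun hs => ⟨_, mem_image_of_mem _ hs, image_preimage_subset _ _⟩

theorem nhds_nhdsOneGroupFilterBasis (x : G) :
    @nhds G (nhdsOneGroupFilterBasis H hconj).topology x =
      Filter.map (fun v : H => x * v) (𝓝 1) := by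
  rw [GroupFilterBasis.nhds_eq, GroupFilterBasis.N, filter_nhdsOneGroupFilterBasis, Filter.map_map]
  rfl

theorem isOpen_nhdsOneGroupFilterBasis :
    @IsOpen G (nhdsOneGroupFilterBasis H hconj).topology (H : Set G) := by
  let _ := (nhdsOneGroupFilterBasis H hconj).topology
  refine isOpen_iff_mem_nhds.2 fun x hx => ?_
  rw [nhds_nhdsOneGroupFilterBasis]
  exact Filter.mem_map.2 (univ_mem' fun v : H => H.mul_mem hx v.2)

theorem induced_nhdsOneGroupFilterBasis :
    TopologicalSpace.induced ((↑) : H → G) (nhdsOneGroupFilterBasis H hconj).topology =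
      ‹TopologicalSpace H› := by
  let _ := (nhdsOneGroupFilterBasis H hconj).topology
  refine TopologicalSpace.ext_nhds fun h => ?_
  rw [nhds_induced, nhds_nhdsOneGroupFilterBasis]
  change Filter.comap ((↑) : H → G) (Filter.map (((↑) : H → G) ∘ (h * ·)) (𝓝 1)) = _
  rw [← Filter.map_map, map_mul_left_nhds_one, comap_map Subtype.coe_injective]

end Subgroup

/-- Let `H` be a subgroup of an abstract group `G`, equipped with a topology making it a
topological group, and suppose that conjugation by any `g ∈ G` is "continuous at 1" into `H`:
for each identity neighborhood `U` in `H` there is an identity neighborhood `V` with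
`g V g⁻¹ ⊆ U` (in particular `g V g⁻¹ ⊆ H`). Then there is a unique group topology on `G` for
which `H` is open and whose subspace topology on `H` is the given one. -/
theorem stmt6 {G : Type*} [Group G] (H : Subgroup G)
    [ts : TopologicalSpace H] [IsTopologicalGroup H]
    (hconj : ∀ g : G, ∀ U ∈ nhds (1 : H), ∃ V ∈ nhds (1 : H),
      ∀ v ∈ V, g * (v : G) * g⁻¹ ∈ H ∧ g * (v : G) * g⁻¹ ∈ (fun h : H => (h : G)) '' U) :
    ∃! t : TopologicalSpace G, @IsTopologicalGroup G t _ ∧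
      @IsOpen G t (H : Set G) ∧
      TopologicalSpace.induced (fun h : H => (h : G)) t = ts := by
  have htendsto : ∀ g : G,
      Tendsto (fun v : H => g * (v : G) * g⁻¹) (𝓝 1) (map (↑) (𝓝 (1 : H))) := by
    intro g s hs
    obtain ⟨V, hV, hVs⟩ := hconj g (Subtype.val ⁻¹' s) hs
    exact mem_map.2 (mem_of_superset hV fun v hv =>
      mem_preimage.2 (image_preimage_subset _ _ (hVs v hv).2))
  set B := H.nhdsOneGroupFilterBasis htendsto
  refine ⟨B.topology, ⟨B.isTopologicalGroup, Subgroup.isOpen_nhdsOneGroupFilterBasis htendsto,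
    Subgroup.induced_nhdsOneGroupFilterBasis htendsto⟩, ?_⟩
  rintro t ⟨htop, hopen, hind⟩
  refine IsTopologicalGroup.ext htop B.isTopologicalGroup ?_
  rw [@nhds_eq_map_val_of_isOpen G t _ ts hopen hind 1 H.one_mem, B.nhds_one_eq,
    Subgroup.filter_nhdsOneGroupFilterBasis]
  rfl
end

section
/- Let q ≥ 2, let D be a subgroup of the symmetric group Sym(q) of permutations of a q-element set, and let n ≥ 3q − 1. Consider the simple graph whose vertices are pairs (x, c), where x is a q-element subset of {1, …, n} and c is a left coset in Sym(q)/D, and where two vertices (x₁, c₁) and (x₂, c₂) are adjacent if and only if the subsets x₁ and x₂ are disjoint. Then this graph is connected (in particular nonempty). -/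
/-- The graph whose vertices are `q`-element subsets of `{1, …, n}` decorated by a left coset of
`D` in `Sym(q)`, with two vertices adjacent iff their underlying subsets are disjoint. -/
def decoratedDisjointnessGraph (q n : ℕ) (hq : 0 < q) (D : Subgroup (Equiv.Perm (Fin q))) :
    SimpleGraph (({x : Finset (Fin n) // x.card = q}) × (Equiv.Perm (Fin q) ⧸ D)) where
  Adj v w := Disjoint (v.1 : Finset (Fin n)) (w.1 : Finset (Fin n))
  symm := ⟨fun v w h => h.symm⟩
  loopless := ⟨fun v h => by
    have h0 : (v.1 : Finset (Fin n)) = ⊥ := disjoint_self.mp h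
    have hc := v.1.2
    rw [h0] at hc
    simp only [Finset.bot_eq_empty, Finset.card_empty] at hc
    omega⟩

/-!
Any two vertices are at distance at most two. If the underlying subsets `x₁, x₂` meet, then
`|x₁ ∪ x₂| ≤ 2q - 1`, so `n ≥ 3q - 1` leaves room for a `q`-subset disjoint from both, and any
decoration of it is a common neighbour.
-/

namespace Finset

variable {α : Type*} [DecidableEq α]

lemma card_union_lt_of_not_disjoint {s t : Finset α} (h : ¬Disjoint s t) :
    #(s ∪ t) < #s + #t :=
  lt_of_le_of_ne (card_union_le s t) (mt card_union_eq_card_add_card.mp h)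

lemma exists_card_eq_disjoint [Fintype α] (s : Finset α) {q : ℕ} (h : q + #s ≤ Fintype.card α) :
    ∃ u : Finset α, #u = q ∧ Disjoint u s := by
  obtain ⟨u, hu, hcard⟩ := exists_subset_card_eq (s := sᶜ) (n := q) (by rw [card_compl]; omega)
  exact ⟨u, hcard, subset_compl_iff_disjoint_right.mp hu⟩

end Finset

namespace decoratedDisjointnessGraph

variable {q n : ℕ} (hq : 0 < q) (D : Subgroup (Equiv.Perm (Fin q)))

lemma nonempty_vertices (hqn : q ≤ n) :
    Nonempty ({x : Finset (Fin n) // x.card = q} × (Equiv.Perm (Fin q) ⧸ D)) := by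
  obtain ⟨x, hx, -⟩ := Finset.exists_card_eq_disjoint (∅ : Finset (Fin n)) (q := q) (by simpa)
  exact ⟨(⟨x, hx⟩, (1 : Equiv.Perm (Fin q)))⟩

lemma exists_common_neighbor_of_not_disjoint (hn : 3 * q - 1 ≤ n)
    {v w : {x : Finset (Fin n) // x.card = q} × (Equiv.Perm (Fin q) ⧸ D)}
    (hvw : ¬Disjoint (v.1 : Finset (Fin n)) w.1) :
    ∃ z, (decoratedDisjointnessGraph q n hq D).Adj v z ∧
      (decoratedDisjointnessGraph q n hq D).Adj z w := by
  have hunion := Finset.card_union_lt_of_not_disjoint hvw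
  obtain ⟨z, hz, hdisj⟩ := Finset.exists_card_eq_disjoint ((v.1 : Finset (Fin n)) ∪ w.1) (q := q)
    (by rw [Fintype.card_fin, v.1.2, w.1.2] at *; omega)
  rw [Finset.disjoint_union_right] at hdisj
  exact ⟨(⟨z, hz⟩, v.2), hdisj.1.symm, hdisj.2⟩

lemma preconnected (hn : 3 * q - 1 ≤ n) : (decoratedDisjointnessGraph q n hq D).Preconnected := by
  intro v w
  by_cases hvw : Disjoint (v.1 : Finset (Fin n)) w.1
  · exact SimpleGraph.Adj.reachable hvw
  · obtain ⟨z, hvz, hzw⟩ := exists_common_neighbor_of_not_disjoint hq D hn hvw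
    exact hvz.reachable.trans hzw.reachable

end decoratedDisjointnessGraph

/-- For `q ≥ 2`, any subgroup `D ≤ Sym(q)` and `n ≥ 3q - 1`, the graph of `Sym(q)/D`-decorated
`q`-element subsets of `{1, …, n}`, with adjacency given by disjointness, is connected. -/
theorem stmt7 (q n : ℕ) (hq : 2 ≤ q) (D : Subgroup (Equiv.Perm (Fin q)))
    (hn : 3 * q - 1 ≤ n) :
    (decoratedDisjointnessGraph q n (by omega) D).Connected :=
  have := decoratedDisjointnessGraph.nonempty_vertices D (n := n) (by omega)
  ⟨decoratedDisjointnessGraph.preconnected _ D hn⟩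
end
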